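/- If σ and τ are cocycles and u : H → R is a convolution-invertible k-linear map such that τ(h ⊗ g) = u⁻¹(g₁) u⁻¹(h₁) σ(h₂ ⊗ g₂) u(h₃g₃) for all g, h ∈ H, then the k-linear map R ⊗ H → R ⊗ H sending a ⊗ h to a u(h₁) ⊗ h₂ is an isomorphism of algebras from the twisted product R_σ[H] to the twisted product R_τ[H]. -/

import Mathlib

open TensorProduct LinearMap

noncomputable section TwistedProducts

universe u

variable (k : Type u) [Field k]

/-- The convolution product `(f ∗ g)(x) = f(x₁) g(x₂)` of two linear maps from a
`k`-coalgebra `C` to a `k`-algebra `A`. -/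
def conv {C A : Type u} [AddCommGroup C] [Module k C] [Coalgebra k C]
    [Ring A] [Algebra k A] (f g : C →ₗ[k] A) : C →ₗ[k] A :=
  LinearMap.mul' k A ∘ₗ TensorProduct.map f g ∘ₗ Coalgebra.comul

/-- The unit `x ↦ ε(x)1` for the convolution product. -/
def convOne {C A : Type u} [AddCommGroup C] [Module k C] [Coalgebra k C]
    [Ring A] [Algebra k A] : C →ₗ[k] A :=
  Algebra.linearMap k A ∘ₗ Coalgebra.counit

variable (H : Type u) [Ring H] [HopfAlgebra k H]

/-- `H` is cocommutative: `comul` is invariant under the flip of the two tensor factors. -/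
def IsCocommutative : Prop :=
  (TensorProduct.comm k H H).toLinearMap ∘ₗ Coalgebra.comul = (Coalgebra.comul : H →ₗ[k] H ⊗[k] H)

variable {R : Type u} [CommRing R] [Algebra k R]

/-- The linear map `H ⊗ H ⊗ H →ₗ R`, `(h ⊗ g) ⊗ t ↦ σ(h₁ ⊗ g₁) σ(h₂g₂ ⊗ t)`
(the left-hand side of the cocycle identity, written in Sweedler notation). -/
def cocycleLHS (σ : H ⊗[k] H →ₗ[k] R) : (H ⊗[k] H) ⊗[k] H →ₗ[k] R :=
  LinearMap.mul' k R
    ∘ₗ TensorProduct.map σ (σ ∘ₗ TensorProduct.map (LinearMap.mul' k H) LinearMap.id)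
    ∘ₗ (TensorProduct.assoc k (H ⊗[k] H) (H ⊗[k] H) H).toLinearMap
    ∘ₗ TensorProduct.map Coalgebra.comul LinearMap.id

/-- The linear map `H ⊗ H ⊗ H →ₗ R`, `(h ⊗ g) ⊗ t ↦ σ(g₁ ⊗ t₁) σ(h ⊗ g₂t₂)`
(the right-hand side of the cocycle identity, written in Sweedler notation). -/
def cocycleRHS (σ : H ⊗[k] H →ₗ[k] R) : (H ⊗[k] H) ⊗[k] H →ₗ[k] R :=
  LinearMap.mul' k R
    ∘ₗ TensorProduct.map σ σ
    ∘ₗ (TensorProduct.leftComm k H (H ⊗[k] H) H).toLinearMap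
    ∘ₗ TensorProduct.map LinearMap.id (TensorProduct.map LinearMap.id (LinearMap.mul' k H))
    ∘ₗ TensorProduct.map LinearMap.id Coalgebra.comul
    ∘ₗ (TensorProduct.assoc k H H H).toLinearMap

/-- `σ : H ⊗ H → R` is a cocycle: it is convolution invertible, satisfies the cocycle
identity `σ(h₁ ⊗ g₁)σ(h₂g₂ ⊗ t) = σ(g₁ ⊗ t₁)σ(h ⊗ g₂t₂)` and is normalized:
`σ(h ⊗ 1) = σ(1 ⊗ h) = ε(h)1`. -/
def IsCocycle (σ : H ⊗[k] H →ₗ[k] R) : Prop :=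
  (∃ σ' : H ⊗[k] H →ₗ[k] R, conv k σ σ' = convOne k ∧ conv k σ' σ = convOne k) ∧
  cocycleLHS k H σ = cocycleRHS k H σ ∧
  ∀ h : H, σ (h ⊗ₜ (1 : H)) = algebraMap k R (Coalgebra.counit h) ∧
    σ ((1 : H) ⊗ₜ h) = algebraMap k R (Coalgebra.counit h)

/-- The twisted multiplication on `R ⊗ H`:
`(a ⊗ g) ⊗ (b ⊗ h) ↦ a b σ(h₁ ⊗ g₁) ⊗ h₂ g₂` (Sweedler notation), as a linear map
`(R ⊗ H) ⊗ (R ⊗ H) →ₗ R ⊗ H`. -/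
def twistedMul (σ : H ⊗[k] H →ₗ[k] R) : (R ⊗[k] H) ⊗[k] (R ⊗[k] H) →ₗ[k] R ⊗[k] H :=
  TensorProduct.map (LinearMap.mul' k R) LinearMap.id
    ∘ₗ (TensorProduct.assoc k R R H).symm.toLinearMap
    ∘ₗ TensorProduct.map (LinearMap.mul' k R)
        (TensorProduct.map σ (LinearMap.mul' k H))
    ∘ₗ TensorProduct.map LinearMap.id Coalgebra.comul
    ∘ₗ TensorProduct.map LinearMap.id (TensorProduct.comm k H H).toLinearMap
    ∘ₗ (TensorProduct.tensorTensorTensorComm k R H R H).toLinearMap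

/-- The linear endomorphism of `H ⊗ H` given in Sweedler notation by
`a ⊗ b ↦ (a₁ b S(a₂)) ⊗ a₃`. -/
def adjointTwist : H ⊗[k] H →ₗ[k] H ⊗[k] H :=
  TensorProduct.map
      (LinearMap.mul' k H ∘ₗ TensorProduct.map (LinearMap.mul' k H) LinearMap.id)
      LinearMap.id
    ∘ₗ (TensorProduct.assoc k (H ⊗[k] H) H H).symm.toLinearMap
    ∘ₗ TensorProduct.map LinearMap.id (TensorProduct.map (HopfAlgebra.antipode k) LinearMap.id)
    ∘ₗ (TensorProduct.tensorTensorTensorComm k H H H H).toLinearMap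
    ∘ₗ TensorProduct.map LinearMap.id (TensorProduct.comm k H H).toLinearMap
    ∘ₗ (TensorProduct.assoc k (H ⊗[k] H) H H).toLinearMap
    ∘ₗ TensorProduct.map (TensorProduct.map Coalgebra.comul LinearMap.id) LinearMap.id
    ∘ₗ TensorProduct.map Coalgebra.comul LinearMap.id

/-- A linear map `α : H ⊗ H → A` is *equivariant* if `α(a ⊗ b) = α(a₁ b S(a₂) ⊗ a₃)`
for all `a, b ∈ H` (Sweedler notation). -/
def IsEquivariant {A : Type u} [AddCommGroup A] [Module k A]
    (α : H ⊗[k] H →ₗ[k] A) : Prop :=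
  α ∘ₗ adjointTwist k H = α

end TwistedProducts

noncomputable section
variable (k : Type u) [Field k] (H : Type u) [Ring H] [HopfAlgebra k H]
variable {R : Type u} [CommRing R] [Algebra k R]

/-- The linear map `H ⊗ H →ₗ R` given in Sweedler notation by
`h ⊗ g ↦ u⁻¹(g₁) u⁻¹(h₁) σ(h₂ ⊗ g₂) u(h₃g₃)`, where `u'` plays the role of the
convolution inverse `u⁻¹`. -/
def cohomologousBy (σ : H ⊗[k] H →ₗ[k] R) (u u' : H →ₗ[k] R) : H ⊗[k] H →ₗ[k] R :=
  LinearMap.mul' k R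
    ∘ₗ TensorProduct.map
        (LinearMap.mul' k R ∘ₗ TensorProduct.map u' u'
          ∘ₗ (TensorProduct.comm k H H).toLinearMap)
        (LinearMap.mul' k R ∘ₗ TensorProduct.map σ (u ∘ₗ LinearMap.mul' k H))
    ∘ₗ TensorProduct.map LinearMap.id Coalgebra.comul
    ∘ₗ Coalgebra.comul

/-- The linear map `R ⊗ H →ₗ R ⊗ H`, `a ⊗ h ↦ a u(h₁) ⊗ h₂` (Sweedler notation). -/
def gaugeMap (u : H →ₗ[k] R) : R ⊗[k] H →ₗ[k] R ⊗[k] H :=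
  TensorProduct.map (LinearMap.mul' k R) LinearMap.id
    ∘ₗ (TensorProduct.assoc k R R H).symm.toLinearMap
    ∘ₗ TensorProduct.map LinearMap.id (TensorProduct.map u LinearMap.id)
    ∘ₗ TensorProduct.map LinearMap.id Coalgebra.comul

section ConvLemmas
variable {k : Type u} [Field k] {C A : Type u} [AddCommGroup C] [Module k C] [Coalgebra k C]
  [Ring A] [Algebra k A]

open Coalgebra

lemma conv_apply (f g : C →ₗ[k] A) {c : C} {ι : Type*} (r : Coalgebra.Repr k c ι) :
    conv k f g c = ∑ i ∈ r.index, f (r.left i) * g (r.right i) := by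
  simp only [conv, LinearMap.comp_apply, ← r.eq, map_sum, TensorProduct.map_tmul,
    LinearMap.mul'_apply]

lemma convOne_apply (c : C) : convOne k (A := A) c = algebraMap k A (Coalgebra.counit c) := rfl

lemma conv_assoc (f g h : C →ₗ[k] A) :
    conv k (conv k f g) h = conv k f (conv k g h) := by
  apply LinearMap.ext; intro c
  have r := ℛ k c
  have a₁ : (i : r.ι) → Coalgebra.Repr k (r.left i) (C × C) := fun i => ℛ k (r.left i)
  have a₂ : (i : r.ι) → Coalgebra.Repr k (r.right i) (C × C) := fun i => ℛ k (r.right i)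
  have key2 := congrArg
    (fun x => (LinearMap.mul' k A ∘ₗ TensorProduct.map f (LinearMap.mul' k A ∘ₗ TensorProduct.map g h)) x)
    (Coalgebra.sum_tmul_tmul_eq r a₁ a₂)
  simp only [map_sum, LinearMap.comp_apply, TensorProduct.map_tmul, LinearMap.mul'_apply] at key2
  have L : conv k (conv k f g) h c
      = ∑ i ∈ r.index, ∑ j ∈ (a₁ i).index, f ((a₁ i).left j) * g ((a₁ i).right j) * h (r.right i) := by
    rw [conv_apply _ _ r]
    exact Finset.sum_congr rfl fun i _ => by rw [conv_apply f g (a₁ i), Finset.sum_mul]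
  have Rq : conv k f (conv k g h) c
      = ∑ i ∈ r.index, ∑ j ∈ (a₂ i).index, f (r.left i) * (g ((a₂ i).left j) * h ((a₂ i).right j)) := by
    rw [conv_apply _ _ r]
    exact Finset.sum_congr rfl fun i _ => by rw [conv_apply g h (a₂ i), Finset.mul_sum]
  rw [L, Rq]
  simpa [mul_assoc] using key2

lemma conv_convOne (f : C →ₗ[k] A) : conv k f (convOne k) = f := by
  apply LinearMap.ext; intro c
  have r := ℛ k c
  have h2 : ∑ i ∈ r.index, Coalgebra.counit (R := k) (r.right i) • r.left i = c := by
    have := congrArg (TensorProduct.rid k C) (Coalgebra.sum_tmul_counit_eq r)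
    simp only [map_sum, TensorProduct.rid_tmul, one_smul] at this
    exact this
  have h3 := congrArg f h2
  simp only [map_sum, map_smul] at h3
  rw [conv_apply _ _ r, ← h3]
  refine Finset.sum_congr rfl fun i _ => ?_
  rw [_root_.convOne_apply, ← Algebra.commutes, ← Algebra.smul_def]

lemma convOne_conv (f : C →ₗ[k] A) : conv k (convOne k) f = f := by
  apply LinearMap.ext; intro c
  have r := ℛ k c
  have h2 : ∑ i ∈ r.index, Coalgebra.counit (R := k) (r.left i) • r.right i = c := by
    have := congrArg (TensorProduct.lid k C) (Coalgebra.sum_counit_tmul_eq r)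
    simp only [map_sum, TensorProduct.lid_tmul, one_smul] at this
    exact this
  have h3 := congrArg f h2
  simp only [map_sum, map_smul] at h3
  rw [conv_apply _ _ r, ← h3]
  refine Finset.sum_congr rfl fun i _ => ?_
  rw [_root_.convOne_apply, ← Algebra.smul_def]

end ConvLemmas
open Coalgebra

section GaugeAux

/-- Representation of the comultiplication of a pure tensor in `H ⊗ H`. -/
def tRepr {h g : H} {ι κ : Type*} (rh : Coalgebra.Repr k h ι) (rg : Coalgebra.Repr k g κ) :
    Coalgebra.Repr k (h ⊗ₜ[k] g : H ⊗[k] H) (ι × κ) where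
  index := rh.index ×ˢ rg.index
  left := fun p => rh.left p.1 ⊗ₜ rg.left p.2
  right := fun p => rh.right p.1 ⊗ₜ rg.right p.2
  eq := by
    have hc : Coalgebra.comul (R := k) (h ⊗ₜ[k] g) =
        TensorProduct.tensorTensorTensorComm k H H H H
          (Coalgebra.comul h ⊗ₜ Coalgebra.comul g) := rfl
    rw [hc, ← rh.eq, ← rg.eq]
    simp [TensorProduct.sum_tmul, TensorProduct.tmul_sum, map_sum, Finset.sum_product]
    rw [Finset.sum_comm]

/-- Representation of the comultiplication of a product in `H`. -/
def mRepr {h g : H} {ι κ : Type*} (rh : Coalgebra.Repr k h ι) (rg : Coalgebra.Repr k g κ) :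
    Coalgebra.Repr k (h * g) (ι × κ) where
  index := rh.index ×ˢ rg.index
  left := fun p => rh.left p.1 * rg.left p.2
  right := fun p => rh.right p.1 * rg.right p.2
  eq := by
    rw [Bialgebra.comul_mul, ← rh.eq, ← rg.eq, Finset.sum_mul_sum]
    simp [Finset.sum_product, Algebra.TensorProduct.tmul_mul_tmul]

lemma repr_collapse_left {M : Type u} [AddCommGroup M] [Module k M] {h : H}
    {ι : Type*} (r : Coalgebra.Repr k h ι) (f : H →ₗ[k] M) :
    ∑ i ∈ r.index, Coalgebra.counit (R := k) (r.left i) • f (r.right i) = f h := by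
  have h2 : ∑ i ∈ r.index, Coalgebra.counit (R := k) (r.left i) • r.right i = h := by
    have := congrArg (TensorProduct.lid k H) (Coalgebra.sum_counit_tmul_eq r)
    simp only [map_sum, TensorProduct.lid_tmul, one_smul] at this
    exact this
  have h3 := congrArg f h2
  simp only [map_sum, map_smul] at h3
  exact h3

lemma repr_collapse_right {M : Type u} [AddCommGroup M] [Module k M] {h : H}
    {ι : Type*} (r : Coalgebra.Repr k h ι) (f : H →ₗ[k] M) :
    ∑ i ∈ r.index, Coalgebra.counit (R := k) (r.right i) • f (r.left i) = f h := by
  have h2 : ∑ i ∈ r.index, Coalgebra.counit (R := k) (r.right i) • r.left i = h := by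
    have := congrArg (TensorProduct.rid k H) (Coalgebra.sum_tmul_counit_eq r)
    simp only [map_sum, TensorProduct.rid_tmul, one_smul] at this
    exact this
  have h3 := congrArg f h2
  simp only [map_sum, map_smul] at h3
  exact h3


/-- `r ↦ r ⊗ₜ 1`. -/
def gaIncl : R →ₗ[k] R ⊗[k] H := (TensorProduct.mk k R H).flip 1

/-- `x ↦ σ(x) ⊗ₜ 1`. -/
def gaF (σ : H ⊗[k] H →ₗ[k] R) : H ⊗[k] H →ₗ[k] R ⊗[k] H := gaIncl k H ∘ₗ σ

/-- `h ⊗ g ↦ u(hg) ⊗ₜ 1`. -/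
def gaFu (u : H →ₗ[k] R) : H ⊗[k] H →ₗ[k] R ⊗[k] H :=
  gaIncl k H ∘ₗ u ∘ₗ LinearMap.mul' k H

/-- `h ⊗ g ↦ 1 ⊗ₜ hg`. -/
def gaF3 : H ⊗[k] H →ₗ[k] R ⊗[k] H := TensorProduct.mk k R H 1 ∘ₗ LinearMap.mul' k H

/-- `h ⊗ g ↦ ε(h) a(g) ⊗ₜ 1`. -/
def gaV (a : H →ₗ[k] R) : H ⊗[k] H →ₗ[k] R ⊗[k] H :=
  gaIncl k H ∘ₗ a ∘ₗ ((TensorProduct.lid k H).toLinearMap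
    ∘ₗ TensorProduct.map Coalgebra.counit LinearMap.id)

/-- `h ⊗ g ↦ a(h) ε(g) ⊗ₜ 1`. -/
def gaW (a : H →ₗ[k] R) : H ⊗[k] H →ₗ[k] R ⊗[k] H :=
  gaIncl k H ∘ₗ a ∘ₗ ((TensorProduct.rid k H).toLinearMap
    ∘ₗ TensorProduct.map LinearMap.id Coalgebra.counit)

/-- `h ⊗ g ↦ (b h * a g) ⊗ₜ 1`. -/
def gaVW (a b : H →ₗ[k] R) : H ⊗[k] H →ₗ[k] R ⊗[k] H :=
  gaIncl k H ∘ₗ LinearMap.mul' k R ∘ₗ TensorProduct.map b a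

/-- left multiplication by `c` on the `R` factor. -/
def gaMulL (c : R) : R ⊗[k] H →ₗ[k] R ⊗[k] H :=
  TensorProduct.map (LinearMap.mulLeft k c) LinearMap.id

@[simp] lemma gaIncl_apply (r : R) : gaIncl k H r = r ⊗ₜ[k] (1 : H) := rfl
@[simp] lemma gaF_apply (σ : H ⊗[k] H →ₗ[k] R) (x : H ⊗[k] H) :
    gaF k H σ x = σ x ⊗ₜ[k] (1 : H) := rfl
@[simp] lemma gaFu_apply (u : H →ₗ[k] R) (h g : H) :
    gaFu k H u (h ⊗ₜ[k] g) = u (h * g) ⊗ₜ[k] (1 : H) := rfl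
@[simp] lemma gaF3_apply (h g : H) :
    gaF3 k H (R := R) (h ⊗ₜ[k] g) = (1 : R) ⊗ₜ[k] (h * g) := rfl
@[simp] lemma gaV_apply (a : H →ₗ[k] R) (h g : H) :
    gaV k H a (h ⊗ₜ[k] g) = (Coalgebra.counit (R := k) h • a g) ⊗ₜ[k] (1 : H) := by
  simp [gaV, TensorProduct.lid_tmul, map_smul, TensorProduct.smul_tmul']
@[simp] lemma gaW_apply (a : H →ₗ[k] R) (h g : H) :
    gaW k H a (h ⊗ₜ[k] g) = (Coalgebra.counit (R := k) g • a h) ⊗ₜ[k] (1 : H) := by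
  simp [gaW, TensorProduct.rid_tmul, map_smul, TensorProduct.smul_tmul']
@[simp] lemma gaVW_apply (a b : H →ₗ[k] R) (h g : H) :
    gaVW k H a b (h ⊗ₜ[k] g) = (b h * a g) ⊗ₜ[k] (1 : H) := rfl
@[simp] lemma gaMulL_tmul (c r : R) (x : H) :
    gaMulL k H c (r ⊗ₜ[k] x) = (c * r) ⊗ₜ[k] x := rfl

end GaugeAux
section GaugeAux2
open Coalgebra

lemma counit_tmul (h g : H) :
    Coalgebra.counit (R := k) (h ⊗ₜ[k] g : H ⊗[k] H) =
      Coalgebra.counit (R := k) h * Coalgebra.counit (R := k) g := by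
  rw [TensorProduct.counit_tmul, smul_eq_mul, mul_comm]

lemma gauge_apply (u : H →ₗ[k] R) (a : R) {h : H} {ι : Type*} (r : Coalgebra.Repr k h ι) :
    gaugeMap k H u (a ⊗ₜ[k] h) = ∑ i ∈ r.index, (a * u (r.left i)) ⊗ₜ[k] r.right i := by
  simp only [gaugeMap, LinearMap.comp_apply, TensorProduct.map_tmul, LinearMap.id_coe, id_eq,
    ← r.eq, TensorProduct.tmul_sum, map_sum, LinearEquiv.coe_coe,
    TensorProduct.assoc_symm_tmul, LinearMap.mul'_apply]

lemma tmul_one_mul (r : R) (z : R ⊗[k] H) :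
    (r ⊗ₜ[k] (1 : H)) * z = gaMulL k H r z := by
  induction z using TensorProduct.induction_on with
  | zero => simp
  | tmul x y => simp [Algebra.TensorProduct.tmul_mul_tmul]
  | add x y hx hy => rw [mul_add, map_add, hx, hy]

lemma gaMulL_mul_apply (c d : R) (z : R ⊗[k] H) :
    gaMulL k H (c * d) z = gaMulL k H c (gaMulL k H d z) := by
  induction z using TensorProduct.induction_on with
  | zero => simp
  | tmul x y => simp [mul_assoc]
  | add x y hx hy => simp only [map_add, hx, hy]

lemma gauge_mulL (u : H →ₗ[k] R) (c : R) (z : R ⊗[k] H) :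
    gaugeMap k H u (gaMulL k H c z) = gaMulL k H c (gaugeMap k H u z) := by
  induction z using TensorProduct.induction_on with
  | zero => simp
  | tmul x y =>
      rw [gaMulL_tmul, gauge_apply k H u (c * x) (ℛ k y), gauge_apply k H u x (ℛ k y), map_sum]
      simp [mul_assoc]
  | add x y hx hy => simp only [map_add, hx, hy]

lemma gauge_tmul_eq (u : H →ₗ[k] R) (a : R) (y : H) :
    gaugeMap k H u (a ⊗ₜ[k] y) = gaMulL k H a (gaugeMap k H u ((1 : R) ⊗ₜ[k] y)) := by
  rw [gauge_apply k H u a (ℛ k y), gauge_apply k H u 1 (ℛ k y), map_sum]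
  simp

lemma gauge_one_mul (u : H →ₗ[k] R) (h g : H) :
    gaugeMap k H u ((1 : R) ⊗ₜ[k] (h * g)) =
      conv k (gaFu k H u) (gaF3 k H) (h ⊗ₜ[k] g) := by
  rw [gauge_apply k H u 1 (mRepr k H (ℛ k h) (ℛ k g)),
    conv_apply _ _ (tRepr k H (ℛ k h) (ℛ k g))]
  simp [mRepr, tRepr, Algebra.TensorProduct.tmul_mul_tmul]

lemma gauge_conv_F3 (σ : H ⊗[k] H →ₗ[k] R) (u : H →ₗ[k] R) (h g : H) :
    gaugeMap k H u (conv k (gaF k H σ) (gaF3 k H) (h ⊗ₜ[k] g)) =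
      conv k (gaF k H σ) (conv k (gaFu k H u) (gaF3 k H)) (h ⊗ₜ[k] g) := by
  rw [conv_apply (gaF k H σ) (gaF3 k H) (tRepr k H (ℛ k h) (ℛ k g)),
    conv_apply (gaF k H σ) _ (tRepr k H (ℛ k h) (ℛ k g)), map_sum]
  refine Finset.sum_congr rfl fun p _ => ?_
  simp only [tRepr, gaF_apply, gaF3_apply, Algebra.TensorProduct.tmul_mul_tmul, mul_one, one_mul]
  rw [gauge_tmul_eq, gauge_one_mul, tmul_one_mul]

lemma conv_gaV_gaW (a b : H →ₗ[k] R) :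
    conv k (gaV k H a) (gaW k H b) = gaVW k H (R := R) a b := by
  apply TensorProduct.ext'; intro h g
  rw [conv_apply _ _ (tRepr k H (ℛ k h) (ℛ k g)), gaVW_apply]
  simp only [tRepr, gaV_apply, gaW_apply, Algebra.TensorProduct.tmul_mul_tmul, mul_one]
  rw [← TensorProduct.sum_tmul]
  congr 1
  rw [Finset.sum_product]
  have hterm : ∀ i j, (Coalgebra.counit (R := k) ((ℛ k h).left i) • a ((ℛ k g).left j)) *
      (Coalgebra.counit (R := k) ((ℛ k g).right j) • b ((ℛ k h).right i)) =
      (Coalgebra.counit (R := k) ((ℛ k h).left i) • b ((ℛ k h).right i)) *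
      (Coalgebra.counit (R := k) ((ℛ k g).right j) • a ((ℛ k g).left j)) := by
    intro i j
    simp only [smul_mul_assoc, mul_smul_comm]
    rw [mul_comm]
  simp_rw [hterm]
  rw [← Finset.sum_mul_sum]
  rw [repr_collapse_left k H (ℛ k h) b, repr_collapse_right k H (ℛ k g) a]

lemma conv_gaW_gaV (a b : H →ₗ[k] R) :
    conv k (gaW k H b) (gaV k H a) = gaVW k H (R := R) a b := by
  apply TensorProduct.ext'; intro h g
  rw [conv_apply _ _ (tRepr k H (ℛ k h) (ℛ k g)), gaVW_apply]
  simp only [tRepr, gaV_apply, gaW_apply, Algebra.TensorProduct.tmul_mul_tmul, mul_one]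
  rw [← TensorProduct.sum_tmul]
  congr 1
  rw [Finset.sum_product]
  have hterm : ∀ i j, (Coalgebra.counit (R := k) ((ℛ k g).left j) • b ((ℛ k h).left i)) *
      (Coalgebra.counit (R := k) ((ℛ k h).right i) • a ((ℛ k g).right j)) =
      (Coalgebra.counit (R := k) ((ℛ k h).right i) • b ((ℛ k h).left i)) *
      (Coalgebra.counit (R := k) ((ℛ k g).left j) • a ((ℛ k g).right j)) := by
    intro i j
    simp only [smul_mul_assoc, mul_smul_comm]
    rw [smul_comm]
  simp_rw [hterm]
  rw [← Finset.sum_mul_sum]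
  rw [repr_collapse_right k H (ℛ k h) b, repr_collapse_left k H (ℛ k g) a]

lemma conv_gaV_gaV (a b : H →ₗ[k] R) :
    conv k (gaV k H a) (gaV k H b) = gaV k H (conv k a b) := by
  apply TensorProduct.ext'; intro h g
  rw [conv_apply _ _ (tRepr k H (ℛ k h) (ℛ k g)), gaV_apply,
    conv_apply a b (ℛ k g)]
  simp only [tRepr, gaV_apply, Algebra.TensorProduct.tmul_mul_tmul, mul_one]
  rw [← TensorProduct.sum_tmul]
  congr 1
  rw [Finset.sum_product]
  have hS : ∑ i ∈ (ℛ k h).index, Coalgebra.counit (R := k) ((ℛ k h).left i) *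
      Coalgebra.counit (R := k) ((ℛ k h).right i) = Coalgebra.counit (R := k) h := by
    simpa [smul_eq_mul] using repr_collapse_left k H (ℛ k h) (Coalgebra.counit (R := k))
  simp_rw [smul_mul_assoc, mul_smul_comm, smul_smul, ← Finset.smul_sum]
  rw [← Finset.sum_smul, hS]

lemma conv_gaW_gaW (a b : H →ₗ[k] R) :
    conv k (gaW k H a) (gaW k H b) = gaW k H (conv k a b) := by
  apply TensorProduct.ext'; intro h g
  rw [conv_apply _ _ (tRepr k H (ℛ k h) (ℛ k g)), gaW_apply,
    conv_apply a b (ℛ k h)]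
  simp only [tRepr, gaW_apply, Algebra.TensorProduct.tmul_mul_tmul, mul_one]
  rw [← TensorProduct.sum_tmul]
  congr 1
  rw [Finset.sum_product]
  have hS : ∑ j ∈ (ℛ k g).index, Coalgebra.counit (R := k) ((ℛ k g).left j) *
      Coalgebra.counit (R := k) ((ℛ k g).right j) = Coalgebra.counit (R := k) g := by
    simpa [smul_eq_mul] using repr_collapse_left k H (ℛ k g) (Coalgebra.counit (R := k))
  simp_rw [smul_mul_assoc, mul_smul_comm, smul_smul, ← Finset.sum_smul]
  simp only [hS]
  rw [← Finset.smul_sum]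

lemma gaV_one : gaV k H (convOne k) = (convOne k : H ⊗[k] H →ₗ[k] R ⊗[k] H) := by
  apply TensorProduct.ext'; intro h g
  rw [gaV_apply, _root_.convOne_apply, _root_.convOne_apply, _root_.counit_tmul]
  simp [Algebra.smul_def, map_mul, Algebra.TensorProduct.one_def,
    Algebra.TensorProduct.algebraMap_apply, Algebra.TensorProduct.tmul_mul_tmul]

lemma gaW_one : gaW k H (convOne k) = (convOne k : H ⊗[k] H →ₗ[k] R ⊗[k] H) := by
  apply TensorProduct.ext'; intro h g
  rw [gaW_apply, _root_.convOne_apply, _root_.convOne_apply, _root_.counit_tmul]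
  simp [Algebra.smul_def, map_mul, mul_comm, Algebra.TensorProduct.one_def,
    Algebra.TensorProduct.algebraMap_apply, Algebra.TensorProduct.tmul_mul_tmul]

end GaugeAux2
section GaugeAux3
open Coalgebra

lemma twistedMul_tmul (σ : H ⊗[k] H →ₗ[k] R) (a b : R) (g h : H) :
    twistedMul k H σ ((a ⊗ₜ[k] g) ⊗ₜ[k] (b ⊗ₜ[k] h)) =
      gaMulL k H (a * b) (conv k (gaF k H σ) (gaF3 k H) (h ⊗ₜ[k] g)) := by
  have he := (tRepr k H (ℛ k h) (ℛ k g)).eq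
  rw [conv_apply _ _ (tRepr k H (ℛ k h) (ℛ k g)), map_sum]
  simp only [twistedMul, LinearMap.comp_apply, LinearEquiv.coe_coe,
    TensorProduct.tensorTensorTensorComm_tmul, TensorProduct.map_tmul, LinearMap.id_coe, id_eq,
    TensorProduct.comm_tmul, ← he, TensorProduct.tmul_sum, map_sum,
    TensorProduct.assoc_symm_tmul, LinearMap.mul'_apply, tRepr, gaF_apply, gaF3_apply,
    Algebra.TensorProduct.tmul_mul_tmul, gaMulL_tmul, one_mul, mul_one]

lemma rhs_eval (τ : H ⊗[k] H →ₗ[k] R) (u : H →ₗ[k] R) (a b : R) (g h : H) :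
    twistedMul k H τ (gaugeMap k H u (a ⊗ₜ[k] g) ⊗ₜ[k] gaugeMap k H u (b ⊗ₜ[k] h)) =
      gaMulL k H (a * b)
        (conv k (gaVW k H u u) (conv k (gaF k H τ) (gaF3 k H)) (h ⊗ₜ[k] g)) := by
  rw [gauge_apply k H u a (ℛ k g), gauge_apply k H u b (ℛ k h),
    TensorProduct.sum_tmul]
  simp_rw [TensorProduct.tmul_sum]
  rw [map_sum]
  simp_rw [map_sum, twistedMul_tmul]
  rw [conv_apply _ _ (tRepr k H (ℛ k h) (ℛ k g)), map_sum]
  simp only [tRepr]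
  rw [Finset.sum_product]
  conv_lhs => rw [Finset.sum_comm]
  refine Finset.sum_congr rfl fun p _ => Finset.sum_congr rfl fun q _ => ?_
  simp only [tRepr, gaVW_apply]
  rw [tmul_one_mul, ← gaMulL_mul_apply]
  congr 1
  ring_nf

lemma gaF_conv (α β : H ⊗[k] H →ₗ[k] R) :
    conv k (gaF k H α) (gaF k H β) = gaF k H (conv k α β) := by
  apply LinearMap.ext; intro c
  rw [conv_apply _ _ (ℛ k c), gaF_apply, conv_apply _ _ (ℛ k c), TensorProduct.sum_tmul]
  simp [Algebra.TensorProduct.tmul_mul_tmul]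

lemma gaFu_eq (u : H →ₗ[k] R) : gaFu k H u = gaF k H (u ∘ₗ LinearMap.mul' k H) := rfl

lemma gaVW_eq (a b : H →ₗ[k] R) :
    gaVW k H (R := R) a b = gaF k H (LinearMap.mul' k R ∘ₗ TensorProduct.map b a) := rfl

lemma cohomologousBy_eq_conv (σ : H ⊗[k] H →ₗ[k] R) (u u' : H →ₗ[k] R) :
    cohomologousBy k H σ u u' =
      conv k (LinearMap.mul' k R ∘ₗ TensorProduct.map u' u'
          ∘ₗ (TensorProduct.comm k H H).toLinearMap)
        (conv k σ (u ∘ₗ LinearMap.mul' k H)) := by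
  have h1 : TensorProduct.map
        (LinearMap.mul' k R ∘ₗ TensorProduct.map u' u' ∘ₗ (TensorProduct.comm k H H).toLinearMap)
        (LinearMap.mul' k R ∘ₗ TensorProduct.map σ (u ∘ₗ LinearMap.mul' k H))
      ∘ₗ TensorProduct.map LinearMap.id Coalgebra.comul =
      TensorProduct.map
        (LinearMap.mul' k R ∘ₗ TensorProduct.map u' u' ∘ₗ (TensorProduct.comm k H H).toLinearMap)
        ((LinearMap.mul' k R ∘ₗ TensorProduct.map σ (u ∘ₗ LinearMap.mul' k H))
          ∘ₗ Coalgebra.comul) := by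
    rw [← TensorProduct.map_comp, LinearMap.comp_id]
  unfold cohomologousBy conv
  show LinearMap.mul' k R
      ∘ₗ (TensorProduct.map
            (LinearMap.mul' k R ∘ₗ TensorProduct.map u' u'
              ∘ₗ (TensorProduct.comm k H H).toLinearMap)
            (LinearMap.mul' k R ∘ₗ TensorProduct.map σ (u ∘ₗ LinearMap.mul' k H))
          ∘ₗ TensorProduct.map LinearMap.id Coalgebra.comul)
      ∘ₗ Coalgebra.comul = _
  rw [h1]
  rfl

lemma comm_mul (u' : H →ₗ[k] R) :
    LinearMap.mul' k R ∘ₗ TensorProduct.map u' u' ∘ₗ (TensorProduct.comm k H H).toLinearMap =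
      LinearMap.mul' k R ∘ₗ TensorProduct.map u' u' := by
  apply TensorProduct.ext'; intro h g
  simp [mul_comm]

lemma cohomologous_decomp (σ : H ⊗[k] H →ₗ[k] R) (u u' : H →ₗ[k] R) :
    gaF k H (cohomologousBy k H σ u u') =
      conv k (gaVW k H u' u') (conv k (gaF k H σ) (gaFu k H u)) := by
  rw [cohomologousBy_eq_conv, comm_mul, gaFu_eq, gaVW_eq, gaF_conv, gaF_conv]

end GaugeAux3
section GaugeAux4
open Coalgebra

lemma gauge_inverse (u v : H →ₗ[k] R) (huv : conv k v u = convOne k) (z : R ⊗[k] H) :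
    gaugeMap k H u (gaugeMap k H v z) = z := by
  induction z using TensorProduct.induction_on with
  | zero => simp
  | add x y hx hy => rw [map_add, map_add, hx, hy]
  | tmul a h =>
    have r := ℛ k h
    have a₁ : (i : r.ι) → Coalgebra.Repr k (r.left i) (H × H) := fun i => ℛ k (r.left i)
    have a₂ : (i : r.ι) → Coalgebra.Repr k (r.right i) (H × H) := fun i => ℛ k (r.right i)
    have key := congrArg (fun x => (TensorProduct.map (LinearMap.mulLeft k a) LinearMap.id
        ∘ₗ TensorProduct.map (LinearMap.mul' k R) LinearMap.id
        ∘ₗ (TensorProduct.assoc k R R H).symm.toLinearMap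
        ∘ₗ TensorProduct.map v (TensorProduct.map u LinearMap.id)) x)
      (Coalgebra.sum_tmul_tmul_eq r a₁ a₂)
    simp only [map_sum, LinearMap.comp_apply, TensorProduct.map_tmul, LinearMap.id_coe, id_eq,
      LinearEquiv.coe_coe, TensorProduct.assoc_symm_tmul, LinearMap.mul'_apply,
      LinearMap.mulLeft_apply] at key
    rw [gauge_apply k H v a r, map_sum]
    have hstep : ∀ i ∈ r.index, gaugeMap k H u ((a * v (r.left i)) ⊗ₜ[k] r.right i)
        = ∑ j ∈ (a₂ i).index,
            (a * (v (r.left i) * u ((a₂ i).left j))) ⊗ₜ[k] (a₂ i).right j := by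
      intro i _
      rw [gauge_apply k H u _ (a₂ i)]
      exact Finset.sum_congr rfl fun j _ => by rw [mul_assoc]
    rw [Finset.sum_congr rfl hstep, ← key]
    have hin : ∀ i ∈ r.index,
        ∑ j ∈ (a₁ i).index,
            (a * (v ((a₁ i).left j) * u ((a₁ i).right j))) ⊗ₜ[k] r.right i
        = Coalgebra.counit (R := k) (r.left i) • (a ⊗ₜ[k] r.right i) := by
      intro i _
      rw [← TensorProduct.sum_tmul, ← Finset.mul_sum, ← conv_apply v u (a₁ i), huv,
        _root_.convOne_apply, ← Algebra.commutes, ← Algebra.smul_def, ← TensorProduct.smul_tmul']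
    rw [Finset.sum_congr rfl hin]
    exact repr_collapse_left k H r (TensorProduct.mk k R H a)

lemma conv_gaVW_inv (u u' : H →ₗ[k] R) (hu : conv k u u' = convOne k) :
    conv k (gaVW k H u u) (gaVW k H u' u') = (convOne k : H ⊗[k] H →ₗ[k] R ⊗[k] H) := by
  calc conv k (gaVW k H u u) (gaVW k H u' u')
      = conv k (conv k (gaV k H u) (gaW k H u)) (conv k (gaV k H u') (gaW k H u')) := by
        rw [conv_gaV_gaW, conv_gaV_gaW]
    _ = conv k (gaV k H u) (conv k (conv k (gaW k H u) (gaV k H u')) (gaW k H u')) := by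
        rw [conv_assoc, ← conv_assoc (gaW k H u) (gaV k H u') (gaW k H u')]
    _ = conv k (gaV k H u) (conv k (conv k (gaV k H u') (gaW k H u)) (gaW k H u')) := by
        rw [conv_gaW_gaV k H u' u, ← conv_gaV_gaW k H u' u]
    _ = conv k (gaV k H u) (conv k (gaV k H u') (gaW k H (conv k u u'))) := by
        rw [conv_assoc, conv_gaW_gaW]
    _ = conv k (gaV k H u) (gaV k H u') := by rw [hu, gaW_one, conv_convOne]
    _ = convOne k := by rw [conv_gaV_gaV, hu, gaV_one]

lemma conv_master (σ τ : H ⊗[k] H →ₗ[k] R) (u u' : H →ₗ[k] R)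
    (hu : conv k u u' = convOne k) (hτ : τ = cohomologousBy k H σ u u') :
    conv k (gaVW k H u u) (conv k (gaF k H τ) (gaF3 k H)) =
      conv k (gaF k H σ) (conv k (gaFu k H u) (gaF3 k H)) := by
  rw [hτ, cohomologous_decomp, conv_assoc, ← conv_assoc (gaVW k H u u),
    conv_gaVW_inv k H u u' hu, convOne_conv, conv_assoc]

end GaugeAux4
/-- Let `H` be a Hopf algebra over a field `k` and `R` a commutative
`k`-algebra.  If `σ` and `τ` are cocycles and `u : H → R` is a convolution-invertible
linear map (with convolution inverse `u'`) such that
`τ(h ⊗ g) = u⁻¹(g₁) u⁻¹(h₁) σ(h₂ ⊗ g₂) u(h₃g₃)` for all `g, h ∈ H`, then the linear map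
`R ⊗ H → R ⊗ H`, `a ⊗ h ↦ a u(h₁) ⊗ h₂`, is an isomorphism of algebras from the twisted
product `R_σ[H]` to the twisted product `R_τ[H]`. -/
theorem gaugeMap_algebra_isomorphism
    (σ τ : H ⊗[k] H →ₗ[k] R) (u u' : H →ₗ[k] R)
    (hσ : IsCocycle k H σ) (hτcocycle : IsCocycle k H τ)
    (hu : conv k u u' = convOne k) (hu' : conv k u' u = convOne k)
    (hτ : τ = cohomologousBy k H σ u u') :
    Function.Bijective (gaugeMap k H u) ∧
      (∀ x y : R ⊗[k] H,
        gaugeMap k H u (twistedMul k H σ (x ⊗ₜ y)) =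
          twistedMul k H τ (gaugeMap k H u x ⊗ₜ gaugeMap k H u y)) ∧
      gaugeMap k H u (((1 : R) ⊗ₜ (1 : H)) : R ⊗[k] H) = (1 : R) ⊗ₜ (1 : H) := by
  have h1 : Coalgebra.comul (R := k) (1 : H) = (1 : H) ⊗ₜ[k] (1 : H) := by
    rw [Bialgebra.comul_one, Algebra.TensorProduct.one_def]
  have hone : u 1 = 1 := by
    have huu1 : u 1 * u' 1 = 1 := by
      have := LinearMap.congr_fun hu 1
      unfold conv _root_.convOne at this
      simpa [h1, Bialgebra.counit_one] using this
    have hc11 : Coalgebra.comul (R := k) ((1 : H) ⊗ₜ[k] (1 : H)) =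
        ((1 : H) ⊗ₜ[k] (1 : H)) ⊗ₜ[k] ((1 : H) ⊗ₜ[k] (1 : H)) := by
      have hrfl : Coalgebra.comul (R := k) ((1 : H) ⊗ₜ[k] (1 : H)) =
          TensorProduct.tensorTensorTensorComm k H H H H
            (Coalgebra.comul (1 : H) ⊗ₜ Coalgebra.comul (1 : H)) := rfl
      rw [hrfl, h1]
      simp
    have hτ11 : τ ((1 : H) ⊗ₜ[k] (1 : H)) = 1 := by
      have := (hτcocycle.2.2 1).1
      simpa [Bialgebra.counit_one] using this
    have hσ11 : σ ((1 : H) ⊗ₜ[k] (1 : H)) = 1 := by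
      have := (hσ.2.2 1).1
      simpa [Bialgebra.counit_one] using this
    have hcoh : τ ((1 : H) ⊗ₜ[k] (1 : H)) = u' 1 * u' 1 * u 1 := by
      rw [hτ]
      unfold cohomologousBy
      simp only [LinearMap.comp_apply, hc11, TensorProduct.map_tmul, LinearMap.id_coe, id_eq,
        LinearEquiv.coe_coe, TensorProduct.comm_tmul, LinearMap.mul'_apply, hσ11, one_mul,
        mul_one]
    have h2 : u' 1 * u' 1 * u 1 = 1 := by rw [← hcoh, hτ11]
    linear_combination (u 1 * u' 1 + 1) * huu1 - u 1 * h2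
  refine ⟨?_, ?_, ?_⟩
  · exact ⟨Function.LeftInverse.injective (gauge_inverse k H u' u hu),
      Function.RightInverse.surjective (gauge_inverse k H u u' hu')⟩
  · intro x y
    induction x using TensorProduct.induction_on with
    | zero => simp [TensorProduct.zero_tmul]
    | add x1 x2 hx1 hx2 =>
        rw [TensorProduct.add_tmul, map_add, map_add, map_add, TensorProduct.add_tmul, map_add,
          hx1, hx2]
    | tmul a g =>
      induction y using TensorProduct.induction_on with
      | zero => simp [TensorProduct.tmul_zero]
      | add y1 y2 hy1 hy2 =>
          rw [TensorProduct.tmul_add, map_add, map_add, map_add, TensorProduct.tmul_add, map_add,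
            hy1, hy2]
      | tmul b h =>
          rw [twistedMul_tmul, gauge_mulL, gauge_conv_F3, rhs_eval,
            conv_master k H σ τ u u' hu hτ]
  · rw [gauge_apply k H u 1 (ι := H) ⟨{1}, fun _ => 1, fun _ => 1, by simp [h1]⟩]
    simp [hone]

end
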